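/- The continuous q-Hermite polynomial admits the explicit trigonometric representation H_n(cos θ | q) = Σ_{k=0}^{n} [(q;q)_n / ((q;q)_k (q;q)_{n-k})] · e^{i(n-2k)θ}, where (q;q)_m = ∏_{j=1}^{m} (1-q^j). -/
import Mathlib

open scoped Real

/-- The continuous q-Hermite polynomials of Rogers. -/
noncomputable def qHermite (q : ℝ) : ℕ → Polynomial ℝ
  | 0 => 1
  | 1 => Polynomial.C 2 * Polynomial.X
  | (n + 2) => Polynomial.C 2 * Polynomial.X * qHermite q (n + 1)
      - Polynomial.C (1 - q ^ (n + 1)) * qHermite q n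

/-- The q-Pochhammer symbol `(q;q)_m = ∏_{j=1}^m (1 - q^j)`. -/
noncomputable def qPochN (q : ℝ) (m : ℕ) : ℝ := ∏ j ∈ Finset.range m, (1 - q ^ (j + 1))

lemma qPochN_succ (q : ℝ) (m : ℕ) : qPochN q (m + 1) = qPochN q m * (1 - q ^ (m + 1)) := by
  simp [qPochN, Finset.prod_range_succ]

lemma qPochN_pos {q : ℝ} (hq0 : 0 < q) (hq1 : q < 1) (m : ℕ) : 0 < qPochN q m := by
  apply Finset.prod_pos
  intro j _
  have : q ^ (j+1) < 1 := pow_lt_one₀ hq0.le hq1 (Nat.succ_ne_zero j)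
  linarith

noncomputable def qb (q : ℝ) (n k : ℕ) : ℝ := qPochN q n / (qPochN q k * qPochN q (n - k))

lemma one_sub_pow_pos {q : ℝ} (hq0 : 0 < q) (hq1 : q < 1) (m : ℕ) : 0 < 1 - q ^ (m + 1) := by
  have : q ^ (m+1) < 1 := pow_lt_one₀ hq0.le hq1 (Nat.succ_ne_zero m)
  linarith

lemma qb_zero {q : ℝ} (hq0 : 0 < q) (hq1 : q < 1) (n : ℕ) : qb q n 0 = 1 := by
  have h := (qPochN_pos hq0 hq1 n).ne'
  have h0 : qPochN q 0 = 1 := by simp [qPochN]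
  simp [qb, h0, div_self h]

lemma qb_self {q : ℝ} (hq0 : 0 < q) (hq1 : q < 1) (n : ℕ) : qb q n n = 1 := by
  have h := (qPochN_pos hq0 hq1 n).ne'
  have h0 : qPochN q 0 = 1 := by simp [qPochN]
  simp [qb, h0, div_self h]

lemma qb_rec {q : ℝ} (hq0 : 0 < q) (hq1 : q < 1) (n k : ℕ) (hk : k ≤ n) :
    qb q (n+2) (k+1) = qb q (n+1) (k+1) + qb q (n+1) k - (1 - q^(n+1)) * qb q n k := by
  have h1 : n + 2 - (k + 1) = (n - k) + 1 := by omega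
  have h2 : n + 1 - (k + 1) = n - k := by omega
  have h3 : n + 1 - k = (n - k) + 1 := by omega
  unfold qb
  rw [h1, h2, h3, qPochN_succ q (n+1), qPochN_succ q n, qPochN_succ q k, qPochN_succ q (n-k)]
  have hPn := (qPochN_pos hq0 hq1 n).ne'
  have hPk := (qPochN_pos hq0 hq1 k).ne'
  have hPm := (qPochN_pos hq0 hq1 (n-k)).ne'
  have e1 := (one_sub_pow_pos hq0 hq1 k).ne'
  have e2 := (one_sub_pow_pos hq0 hq1 (n-k)).ne'
  have e3 := (one_sub_pow_pos hq0 hq1 n).ne'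
  have pk : q ^ (k+1) = q * q ^ k := by ring
  have pm : q ^ ((n-k)+1) = q * q ^ (n-k) := by ring
  have pn : q ^ (n+1) = q * (q ^ k * q ^ (n-k)) := by
    rw [← pow_add]; rw [show k + (n-k) = n by omega]; ring
  have pn2 : q ^ (n+1+1) = q * q * (q ^ k * q ^ (n-k)) := by
    rw [← pow_add]; rw [show k + (n-k) = n by omega]; ring
  rw [pk] at e1
  rw [pm] at e2
  rw [pn] at e3
  rw [pn2, pn, pk, pm]
  field_simp
  ring

noncomputable def qE (θ : ℝ) (m k : ℕ) : ℂ :=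
  Complex.exp (Complex.I * (((m : ℝ) - 2 * k) * θ : ℝ))

lemma qE_shift (θ : ℝ) (n k : ℕ) : qE θ (n+2) (k+1) = qE θ n k := by
  unfold qE
  congr 2
  push_cast
  ring

lemma qE_two_cos (θ : ℝ) (m k : ℕ) :
    2 * (Real.cos θ : ℂ) * qE θ (m+1) k = qE θ (m+2) k + qE θ (m+2) (k+1) := by
  unfold qE
  have h1 : (Complex.I * ((((m+2:ℕ) : ℝ) - 2 * (k:ℕ)) * θ : ℝ)) =
      Complex.I * ((((m+1:ℕ) : ℝ) - 2 * (k:ℕ)) * θ : ℝ) + (θ:ℂ) * Complex.I := by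
    push_cast; ring
  have h2 : (Complex.I * ((((m+2:ℕ) : ℝ) - 2 * ((k+1:ℕ):ℕ)) * θ : ℝ)) =
      Complex.I * ((((m+1:ℕ) : ℝ) - 2 * (k:ℕ)) * θ : ℝ) + (-(θ:ℂ)) * Complex.I := by
    push_cast; ring
  rw [h1, h2, Complex.exp_add, Complex.exp_add, ← mul_add]
  rw [Complex.ofReal_cos, Complex.cos]
  ring

lemma qHermite_main (q : ℝ) (hq0 : 0 < q) (hq1 : q < 1) (θ : ℝ) : ∀ n : ℕ,
    (((qHermite q n).eval (Real.cos θ) : ℝ) : ℂ) =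
      ∑ k ∈ Finset.range (n + 1), ((qb q n k : ℝ) : ℂ) * qE θ n k := by
  have base0 : (((qHermite q 0).eval (Real.cos θ) : ℝ) : ℂ) =
      ∑ k ∈ Finset.range 1, ((qb q 0 k : ℝ) : ℂ) * qE θ 0 k := by
    simp [qHermite, qb_zero hq0 hq1, qE]
  have base1 : (((qHermite q 1).eval (Real.cos θ) : ℝ) : ℂ) =
      ∑ k ∈ Finset.range 2, ((qb q 1 k : ℝ) : ℂ) * qE θ 1 k := by
    have e0 := qb_zero hq0 hq1 1
    have e1 := qb_self hq0 hq1 1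
    rw [Finset.sum_range_succ, Finset.sum_range_one, e0, e1]
    have h : ((qHermite q 1).eval (Real.cos θ) : ℝ) = 2 * Real.cos θ := by
      simp [qHermite]
    rw [h]
    have hE0 : qE θ 1 0 = Complex.exp ((θ:ℂ) * Complex.I) := by
      unfold qE; congr 1; push_cast; ring
    have hE1 : qE θ 1 1 = Complex.exp ((-(θ:ℂ)) * Complex.I) := by
      unfold qE; congr 1; push_cast; ring
    rw [hE0, hE1]
    push_cast [Complex.ofReal_cos]
    rw [Complex.cos]
    ring
  have step : ∀ n : ℕ,
      ((((qHermite q n).eval (Real.cos θ) : ℝ) : ℂ) =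
        ∑ k ∈ Finset.range (n + 1), ((qb q n k : ℝ) : ℂ) * qE θ n k) →
      ((((qHermite q (n+1)).eval (Real.cos θ) : ℝ) : ℂ) =
        ∑ k ∈ Finset.range (n + 2), ((qb q (n+1) k : ℝ) : ℂ) * qE θ (n+1) k) →
      ((((qHermite q (n+2)).eval (Real.cos θ) : ℝ) : ℂ) =
        ∑ k ∈ Finset.range (n + 3), ((qb q (n+2) k : ℝ) : ℂ) * qE θ (n+2) k) := by
    intro n ihn ihn1
    have heval : (((qHermite q (n+2)).eval (Real.cos θ) : ℝ) : ℂ) =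
        2 * (Real.cos θ : ℂ) * (((qHermite q (n+1)).eval (Real.cos θ) : ℝ) : ℂ)
          - ((1 - q^(n+1) : ℝ) : ℂ) * (((qHermite q n).eval (Real.cos θ) : ℝ) : ℂ) := by
      show (((qHermite q (n+2)).eval (Real.cos θ) : ℝ) : ℂ) = _
      rw [show qHermite q (n+2) = Polynomial.C 2 * Polynomial.X * qHermite q (n + 1)
          - Polynomial.C (1 - q ^ (n + 1)) * qHermite q n from rfl]
      push_cast [Polynomial.eval_sub, Polynomial.eval_mul, Polynomial.eval_C, Polynomial.eval_X]
      ring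
    rw [heval, ihn, ihn1]
    rw [Finset.mul_sum, Finset.mul_sum]
    -- transform first sum: each term 2cosθ * (qb * E) = qb*(E(n+2)k) + qb*(E(n+2)(k+1))
    have hfirst : ∑ k ∈ Finset.range (n + 2),
        2 * (Real.cos θ : ℂ) * (((qb q (n+1) k : ℝ) : ℂ) * qE θ (n+1) k)
        = (∑ k ∈ Finset.range (n + 2), ((qb q (n+1) k : ℝ) : ℂ) * qE θ (n+2) k)
          + ∑ k ∈ Finset.range (n + 2), ((qb q (n+1) k : ℝ) : ℂ) * qE θ (n+2) (k+1) := by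
      rw [← Finset.sum_add_distrib]
      apply Finset.sum_congr rfl
      intro k _
      have := qE_two_cos θ n k
      calc 2 * (Real.cos θ : ℂ) * (((qb q (n+1) k : ℝ) : ℂ) * qE θ (n+1) k)
          = ((qb q (n+1) k : ℝ) : ℂ) * (2 * (Real.cos θ : ℂ) * qE θ (n+1) k) := by ring
        _ = _ := by rw [this]; ring
    rw [hfirst]
    have hsecond : ∑ k ∈ Finset.range (n + 1),
        ((1 - q^(n+1) : ℝ) : ℂ) * (((qb q n k : ℝ) : ℂ) * qE θ n k)
        = ∑ k ∈ Finset.range (n + 1),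
            ((1 - q^(n+1) : ℝ) : ℂ) * ((qb q n k : ℝ) : ℂ) * qE θ (n+2) (k+1) := by
      apply Finset.sum_congr rfl
      intro k _
      rw [qE_shift]
      ring
    rw [hsecond]
    -- peel boundary terms
    rw [Finset.sum_range_succ' (fun k => ((qb q (n+1) k : ℝ) : ℂ) * qE θ (n+2) k) (n+1)]
    rw [Finset.sum_range_succ (fun k => ((qb q (n+1) k : ℝ) : ℂ) * qE θ (n+2) (k+1)) (n+1)]
    rw [Finset.sum_range_succ' (fun k => ((qb q (n+2) k : ℝ) : ℂ) * qE θ (n+2) k) (n+2)]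
    rw [Finset.sum_range_succ (fun k => ((qb q (n+2) (k+1) : ℝ) : ℂ) * qE θ (n+2) (k+1)) (n+1)]
    rw [qb_zero hq0 hq1, qb_zero hq0 hq1, qb_self hq0 hq1, qb_self hq0 hq1]
    have hmid : ∑ k ∈ Finset.range (n + 1), ((qb q (n+2) (k+1) : ℝ) : ℂ) * qE θ (n+2) (k+1)
        = ∑ k ∈ Finset.range (n + 1),
            ((((qb q (n+1) (k+1) : ℝ) : ℂ) + ((qb q (n+1) k : ℝ) : ℂ)
              - ((1 - q^(n+1) : ℝ) : ℂ) * ((qb q n k : ℝ) : ℂ)) * qE θ (n+2) (k+1)) := by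
      apply Finset.sum_congr rfl
      intro k hk
      have hkn : k ≤ n := by
        have := Finset.mem_range.mp hk; omega
      rw [qb_rec hq0 hq1 n k hkn]
      push_cast
      ring
    rw [hmid]
    simp only [sub_mul, add_mul, Finset.sum_add_distrib, Finset.sum_sub_distrib]
    ring
  intro n
  induction n using Nat.strong_induction_on with
  | _ n ih =>
    match n with
    | 0 => exact base0
    | 1 => exact base1
    | (m+2) => exact step m (ih m (by omega)) (ih (m+1) (by omega))

theorem qHermite_trig_representation (q : ℝ) (hq0 : 0 < q) (hq1 : q < 1) (θ : ℝ) (n : ℕ) :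
    (((qHermite q n).eval (Real.cos θ) : ℝ) : ℂ) =
      ∑ k ∈ Finset.range (n + 1),
        ((qPochN q n / (qPochN q k * qPochN q (n - k)) : ℝ) : ℂ) *
          Complex.exp (Complex.I * (((n : ℝ) - 2 * k) * θ : ℝ)) := by
  exact qHermite_main q hq0 hq1 θ n
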